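/- arXiv:1607.02349 — 3 statements merged into one kernel-verified Lean document; each statement's English description precedes it below -/
import Mathlib

section
/- Let $z_{\min} < z_{\max}$, $\mu, \gamma$ nonnegative bounded on $[z_{\min}, z_{\max}]$, $M$ an antiderivative of $\mu$, $\alpha>0$, and $\beta = \int_{z_{\min}}^{z_{\max}} \int_{z_{\min}}^{z} \gamma(y) e^{-(M(z)-M(y))} dy\, dz$. If $\beta > 1$, then the function $\rho_{eq}(z) = \frac{P_{eq}}{1+\alpha P_{eq}^2} \int_{z_{\min}}^{z} \gamma(y) e^{-(M(z)-M(y))} dy$ with $P_{eq} = \sqrt{(\beta-1)/\alpha}$ satisfies: (i) $\rho_{eq}'(z) = -\mu(z)\rho_{eq}(z) + \frac{P_{eq}}{1+\alpha P_{eq}^2}\gamma(z)$ for a.e. $z$, (ii) $\rho_{eq}(z_{\min}) = 0$, and (iii) $\int_{z_{\min}}^{z_{\max}} \rho_{eq}(z)\,dz = P_{eq}$. -/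
/-!
With `g = γ e^M`, the profile factors as `ρ_eq(z) = a* e^{-M(z)} ∫_{z_min}^z g`, so the Lebesgue
differentiation theorem for `g` together with the product rule gives the ODE almost everywhere.
The choice of `P_eq` is exactly what makes `1 + α P_eq² = β`, hence `∫ ρ_eq = (P_eq / β) β = P_eq`.
-/

open MeasureTheory Real Set

/-- Solution of `ρ' = -M' ρ + γ`, `ρ a = 0`, by variation of constants. -/
noncomputable def duhamel (a : ℝ) (γ M : ℝ → ℝ) (z : ℝ) : ℝ :=
  ∫ y in a..z, γ y * exp (-(M z - M y))

lemma duhamel_eq_exp_mul_integral (a : ℝ) (γ M : ℝ → ℝ) (z : ℝ) :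
    duhamel a γ M z = exp (-M z) * ∫ y in a..z, γ y * exp (M y) := by
  rw [duhamel, ← intervalIntegral.integral_const_mul]
  congr 1 with y
  rw [neg_sub, sub_eq_neg_add, exp_add]
  ring

@[simp]
lemma duhamel_self (a : ℝ) (γ M : ℝ → ℝ) : duhamel a γ M a = 0 := by
  simp [duhamel]

lemma hasDerivAt_duhamel {a z : ℝ} {γ M : ℝ → ℝ} {m : ℝ} (hM : HasDerivAt M m z)
    (hFTC : HasDerivAt (fun u => ∫ y in a..u, γ y * exp (M y)) (γ z * exp (M z)) z) :
    HasDerivAt (duhamel a γ M) (-m * duhamel a γ M z + γ z) z := by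
  have hprod : HasDerivAt (fun u => exp (-M u) * ∫ y in a..u, γ y * exp (M y))
      (exp (-M z) * -m * (∫ y in a..z, γ y * exp (M y)) + exp (-M z) * (γ z * exp (M z))) z :=
    hM.neg.exp.mul hFTC
  have hcancel : exp (-M z) * exp (M z) = 1 := by rw [← exp_add, neg_add_cancel, exp_zero]
  rw [show duhamel a γ M = _ from funext (duhamel_eq_exp_mul_integral a γ M)]
  refine hprod.congr_deriv ?_
  beta_reduce
  linear_combination γ z * hcancel

lemma ae_hasDerivAt_duhamel {a b : ℝ} {γ μ M : ℝ → ℝ} (hγ : IntervalIntegrable γ volume a b)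
    (hM : ∀ z, HasDerivAt M (μ z) z) :
    ∀ᵐ z ∂volume.restrict (Icc a b),
      HasDerivAt (duhamel a γ M) (-μ z * duhamel a γ M z + γ z) z := by
  have hMcont : Continuous M := continuous_iff_continuousAt.2 fun z => (hM z).continuousAt
  have hint : IntervalIntegrable (fun y => γ y * exp (M y)) volume a b := by
    rw [intervalIntegrable_iff'] at hγ ⊢
    exact hγ.mul_continuousOn (continuous_exp.comp hMcont).continuousOn isCompact_uIcc
  rw [ae_restrict_iff' measurableSet_Icc]
  filter_upwards [hint.ae_hasDerivAt_integral] with z hFTC hz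
  exact hasDerivAt_duhamel (hM z) (hFTC (Icc_subset_uIcc hz) a left_mem_uIcc)

lemma intervalIntegrable_of_abs_le {f : ℝ → ℝ} {a b C : ℝ} (hab : a ≤ b) (hf : Measurable f)
    (hC : ∀ z ∈ Icc a b, |f z| ≤ C) : IntervalIntegrable f volume a b := by
  rw [intervalIntegrable_iff', uIcc_of_le hab]
  refine Measure.integrableOn_of_bounded (M := C) measure_Icc_lt_top.ne
    hf.aestronglyMeasurable ?_
  filter_upwards [ae_restrict_mem measurableSet_Icc] with z hz
  exact hC z hz

lemma one_add_mul_sq_sqrt_div {α β : ℝ} (hα : 0 < α) (hβ : 1 ≤ β) :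
    1 + α * sqrt ((β - 1) / α) ^ 2 = β := by
  rw [sq_sqrt (div_nonneg (by linarith) hα.le)]
  field_simp
  ring

theorem stmt1_general (zmin zmax : ℝ) (hz : zmin < zmax)
    (μ γ M : ℝ → ℝ) (hγmeas : Measurable γ)
    (hγ0 : ∀ z ∈ Icc zmin zmax, 0 ≤ γ z)
    (hγb : ∃ Cγ, ∀ z ∈ Icc zmin zmax, γ z ≤ Cγ)
    (hM : ∀ z, HasDerivAt M (μ z) z)
    (α : ℝ) (hα : 0 < α)
    (β : ℝ)
    (hβ : β = ∫ z in zmin..zmax, ∫ y in zmin..z, γ y * Real.exp (-(M z - M y)))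
    (hβgt : 1 < β)
    (Peq : ℝ) (hPeq : Peq = Real.sqrt ((β - 1) / α))
    (ρeq : ℝ → ℝ)
    (hρeq : ∀ z, ρeq z =
      Peq / (1 + α * Peq ^ 2) * ∫ y in zmin..z, γ y * Real.exp (-(M z - M y))) :
    (∀ᵐ z ∂(volume.restrict (Icc zmin zmax)),
        HasDerivAt ρeq (-μ z * ρeq z + Peq / (1 + α * Peq ^ 2) * γ z) z) ∧
    ρeq zmin = 0 ∧
    (∫ z in zmin..zmax, ρeq z) = Peq := by
  obtain ⟨Cγ, hCγ⟩ := hγb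
  have hγint : IntervalIntegrable γ volume zmin zmax :=
    intervalIntegrable_of_abs_le hz.le hγmeas fun z hzI =>
      abs_le.2 ⟨by linarith [hγ0 z hzI, hCγ z hzI], hCγ z hzI⟩
  have hρ : ρeq = fun z => Peq / (1 + α * Peq ^ 2) * duhamel zmin γ M z := funext hρeq
  have hβ' : (∫ z in zmin..zmax, duhamel zmin γ M z) = β := hβ.symm
  have hden : 1 + α * Peq ^ 2 = β := hPeq ▸ one_add_mul_sq_sqrt_div hα hβgt.le
  subst hρ
  refine ⟨?_, by simp, ?_⟩
  · filter_upwards [ae_hasDerivAt_duhamel hγint hM] with z hzρ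
    exact (hzρ.const_mul _).congr_deriv (by ring)
  · rw [intervalIntegral.integral_const_mul, hβ', hden, div_mul_cancel₀ _ (by linarith)]

theorem stmt1 (zmin zmax : ℝ) (hz : zmin < zmax)
    (μ γ M : ℝ → ℝ) (hμmeas : Measurable μ) (hγmeas : Measurable γ)
    (hμ0 : ∀ z ∈ Icc zmin zmax, 0 ≤ μ z) (hγ0 : ∀ z ∈ Icc zmin zmax, 0 ≤ γ z)
    (hμb : ∃ Cμ, ∀ z ∈ Icc zmin zmax, μ z ≤ Cμ)
    (hγb : ∃ Cγ, ∀ z ∈ Icc zmin zmax, γ z ≤ Cγ)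
    (hM : ∀ z, HasDerivAt M (μ z) z)
    (α : ℝ) (hα : 0 < α)
    (β : ℝ)
    (hβ : β = ∫ z in zmin..zmax, ∫ y in zmin..z, γ y * Real.exp (-(M z - M y)))
    (hβgt : 1 < β)
    (Peq : ℝ) (hPeq : Peq = Real.sqrt ((β - 1) / α))
    (ρeq : ℝ → ℝ)
    (hρeq : ∀ z, ρeq z =
      Peq / (1 + α * Peq ^ 2) * ∫ y in zmin..z, γ y * Real.exp (-(M z - M y))) :
    (∀ᵐ z ∂(volume.restrict (Icc zmin zmax)),
        HasDerivAt ρeq (-μ z * ρeq z + Peq / (1 + α * Peq ^ 2) * γ z) z) ∧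
    ρeq zmin = 0 ∧
    (∫ z in zmin..zmax, ρeq z) = Peq :=
  stmt1_general zmin zmax hz μ γ M hγmeas hγ0 hγb hM α hα β hβ hβgt Peq hPeq ρeq hρeq
end

section
/- Let $\mu, \gamma \in C([z_{\min},z_{\max}])$ be nonnegative, $M' = \mu$, and $\omega \in C^1([z_{\min},z_{\max}])$ nonnegative. Then the balance identity holds: $\int_{z_{\min}}^{z_{\max}} \omega(z)\gamma(z)\,dz = \int_{z_{\min}}^{z_{\max}} \Big[ (\omega(z)\mu(z) - \omega'(z)) \int_{z_{\min}}^{z} \gamma(y) e^{-(M(z)-M(y))} dy + \omega(z_{\max})\gamma(z) e^{-(M(z_{\max})-M(z))} \Big] dz$. -/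
/-!
Put `ρ(z) = ∫_{z_min}^z γ(y) e^{-(M(z) - M(y))} dy`. Since `ρ = e^{-M} ∫ γ e^{M}`, it solves
`ρ' = γ - μ ρ` with `ρ(z_min) = 0`, so `ω γ = (ω ρ)' + (ω μ - ω') ρ`. Integrating gives
`∫ ω γ = ω(z_max) ρ(z_max) + ∫ (ω μ - ω') ρ`, and `ω(z_max) ρ(z_max)` is exactly the integral of the
last term of the right-hand side.
-/

open MeasureTheory Real Set

/-- The stationary profile `ρ_eq / h*` of the paper. -/
noncomputable def dampedPrimitive (γ M : ℝ → ℝ) (a z : ℝ) : ℝ :=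
  ∫ y in a..z, γ y * exp (-(M z - M y))

section DampedPrimitive

variable {γ μ M : ℝ → ℝ} {a b : ℝ}

lemma dampedPrimitive_self (γ M : ℝ → ℝ) (a : ℝ) : dampedPrimitive γ M a a = 0 :=
  intervalIntegral.integral_same

lemma dampedPrimitive_eq_exp_mul (γ M : ℝ → ℝ) (a z : ℝ) :
    dampedPrimitive γ M a z = exp (-M z) * ∫ y in a..z, γ y * exp (M y) := by
  rw [dampedPrimitive, ← intervalIntegral.integral_const_mul]
  congr 1 with y
  rw [neg_sub, sub_eq_neg_add, exp_add]
  ring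

lemma continuousOn_dampedPrimitive (hab : a ≤ b) (hγ : ContinuousOn γ (Icc a b))
    (hM : ContinuousOn M (Icc a b)) : ContinuousOn (dampedPrimitive γ M a) (Icc a b) := by
  have hf : ContinuousOn (fun y => γ y * exp (M y)) (Icc a b) := hγ.mul hM.rexp
  have hF := intervalIntegral.continuousOn_primitive_interval (a := a) (b := b) (μ := volume)
    (by rw [uIcc_of_le hab]; exact hf.integrableOn_Icc)
  rw [uIcc_of_le hab] at hF
  simp_rw [funext (dampedPrimitive_eq_exp_mul γ M a)]
  exact hM.neg.rexp.mul hF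

lemma hasDerivAt_dampedPrimitive (hγ : ContinuousOn γ (Icc a b)) (hM : ContinuousOn M (Icc a b))
    {z : ℝ} (hz : z ∈ Ioo a b) (hMz : HasDerivAt M (μ z) z) :
    HasDerivAt (dampedPrimitive γ M a) (γ z - μ z * dampedPrimitive γ M a z) z := by
  have hf : ContinuousOn (fun y => γ y * exp (M y)) (Icc a b) := hγ.mul hM.rexp
  have hF : HasDerivAt (fun u => ∫ y in a..u, γ y * exp (M y)) (γ z * exp (M z)) z :=
    intervalIntegral.integral_hasDerivAt_right
      ((hf.mono (Icc_subset_Icc_right hz.2.le)).intervalIntegrable_of_Icc hz.1.le)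
      ((hf.mono Ioo_subset_Icc_self).stronglyMeasurableAtFilter isOpen_Ioo z hz)
      (hf.continuousAt (Icc_mem_nhds hz.1 hz.2))
  simp_rw [funext (dampedPrimitive_eq_exp_mul γ M a)]
  refine (hMz.neg.exp.mul hF).congr_deriv ?_
  simp only [Pi.neg_apply, exp_neg]
  field_simp
  ring

end DampedPrimitive

/-- Integration by parts for a solution of `ρ' = γ - μ ρ` vanishing at `a`. -/
lemma integral_mul_eq_of_hasDerivAt_eq_sub {a b : ℝ} {γ μ ρ ω ω' : ℝ → ℝ} (hab : a ≤ b)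
    (hγ : ContinuousOn γ (Icc a b)) (hμ : ContinuousOn μ (Icc a b))
    (hρ : ContinuousOn ρ (Icc a b)) (hρa : ρ a = 0)
    (hρ' : ∀ z ∈ Ioo a b, HasDerivAt ρ (γ z - μ z * ρ z) z)
    (hω : ContinuousOn ω (Icc a b)) (hω' : ContinuousOn ω' (Icc a b))
    (hω'' : ∀ z ∈ Ioo a b, HasDerivAt ω (ω' z) z) :
    ∫ z in a..b, ω z * γ z = ω b * ρ b + ∫ z in a..b, (ω z * μ z - ω' z) * ρ z := by
  have hint : IntervalIntegrable (fun z => ω' z * ρ z + ω z * (γ z - μ z * ρ z)) volume a b :=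
    ((hω'.mul hρ).add (hω.mul (hγ.sub (hμ.mul hρ)))).intervalIntegrable_of_Icc hab
  have hint' : IntervalIntegrable (fun z => (ω z * μ z - ω' z) * ρ z) volume a b :=
    (((hω.mul hμ).sub hω').mul hρ).intervalIntegrable_of_Icc hab
  have hderiv : ∫ z in a..b, ω' z * ρ z + ω z * (γ z - μ z * ρ z) = ω b * ρ b := by
    rw [intervalIntegral.integral_eq_sub_of_hasDerivAt_of_le hab (hω.mul hρ)
      (fun z hz => (hω'' z hz).mul (hρ' z hz)) hint]
    simp [hρa]
  rw [← hderiv, ← intervalIntegral.integral_add hint hint']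
  congr 1 with z
  ring

theorem stmt7_general (zmin zmax : ℝ) (hz : zmin < zmax)
    (μ γ M ω ω' : ℝ → ℝ)
    (hμc : ContinuousOn μ (Icc zmin zmax)) (hγc : ContinuousOn γ (Icc zmin zmax))
    (hM : ∀ z, HasDerivAt M (μ z) z)
    (hω : ∀ z, HasDerivAt ω (ω' z) z) (hω'c : Continuous ω') :
    ∫ z in zmin..zmax, ω z * γ z =
      ∫ z in zmin..zmax,
        ((ω z * μ z - ω' z) * ∫ y in zmin..z, γ y * Real.exp (-(M z - M y)))
          + ω zmax * γ z * Real.exp (-(M zmax - M z)) := by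
  have hab := hz.le
  have hMc : ContinuousOn M (Icc zmin zmax) := fun z _ => (hM z).continuousAt.continuousWithinAt
  have hωc : ContinuousOn ω (Icc zmin zmax) := fun z _ => (hω z).continuousAt.continuousWithinAt
  have hρc := continuousOn_dampedPrimitive hab hγc hMc
  have hboundary : ∫ z in zmin..zmax, ω zmax * γ z * exp (-(M zmax - M z)) =
      ω zmax * dampedPrimitive γ M zmin zmax := by
    simp_rw [mul_assoc, intervalIntegral.integral_const_mul, dampedPrimitive]
  have hsplit : ∫ z in zmin..zmax,
      ((ω z * μ z - ω' z) * ∫ y in zmin..z, γ y * exp (-(M z - M y)))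
        + ω zmax * γ z * exp (-(M zmax - M z)) =
      (∫ z in zmin..zmax, (ω z * μ z - ω' z) * dampedPrimitive γ M zmin z) +
        ω zmax * dampedPrimitive γ M zmin zmax := by
    rw [← hboundary]
    exact intervalIntegral.integral_add
      ((((hωc.mul hμc).sub hω'c.continuousOn).mul hρc).intervalIntegrable_of_Icc hab)
      (((continuousOn_const.mul hγc).mul
        (continuousOn_const.sub hMc).neg.rexp).intervalIntegrable_of_Icc hab)
  rw [hsplit, add_comm]
  exact integral_mul_eq_of_hasDerivAt_eq_sub hab hγc hμc hρc (dampedPrimitive_self γ M zmin)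
    (fun z hz => hasDerivAt_dampedPrimitive hγc hMc hz (hM z)) hωc hω'c.continuousOn
    (fun z _ => hω z)

theorem stmt7 (zmin zmax : ℝ) (hz : zmin < zmax)
    (μ γ M ω ω' : ℝ → ℝ)
    (hμc : ContinuousOn μ (Icc zmin zmax)) (hγc : ContinuousOn γ (Icc zmin zmax))
    (hμ0 : ∀ z ∈ Icc zmin zmax, 0 ≤ μ z) (hγ0 : ∀ z ∈ Icc zmin zmax, 0 ≤ γ z)
    (hM : ∀ z, HasDerivAt M (μ z) z)
    (hω : ∀ z, HasDerivAt ω (ω' z) z) (hω'c : Continuous ω')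
    (hω0 : ∀ z ∈ Icc zmin zmax, 0 ≤ ω z) :
    ∫ z in zmin..zmax, ω z * γ z =
      ∫ z in zmin..zmax,
        ((ω z * μ z - ω' z) * ∫ y in zmin..z, γ y * Real.exp (-(M z - M y)))
          + ω zmax * γ z * Real.exp (-(M zmax - M z)) :=
  stmt7_general zmin zmax hz μ γ M ω ω' hμc hγc hM hω hω'c
end

section
/- Let $\mu, \gamma$ be continuous nonnegative functions on $[z_{\min},z_{\max}]$ with $M' = \mu$. The set of nonnegative stationary states of the budget-constrained model, i.e. nonnegative $C^1$ functions $\rho$ on $[z_{\min},z_{\max}]$ with $\rho(z_{\min}) = 0$ satisfying $\rho'(z) = -\mu(z)\rho(z) + h^*\gamma(z)$ for some constant $h^* \ge 0$ given by the budget formula $h^* = \frac{\int_{z_{\min}}^{z_{\max}}\omega\mu\rho\,dz + \omega(z_{\max})\rho(z_{\max}) - \int_{z_{\min}}^{z_{\max}}\rho\,\omega'\,dz}{\int_{z_{\min}}^{z_{\max}}\omega\gamma\,dz}$, equals exactly $\{ z \mapsto C\int_{z_{\min}}^{z}\gamma(y)e^{-(M(z)-M(y))}dy : C \ge 0\}$.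 -/
/-!
The stationary problem is the linear ODE `ρ' = -μ ρ + h γ`, `ρ(z_min) = 0`, whose unique solution
is `h` times the variation-of-constants profile `∫_{z_min}^z γ(y) e^{-(M z - M y)} dy`: multiplying
the difference of two solutions by `e^M` gives a function with zero derivative. Conversely, the
budget formula for `h` is not an extra constraint: integrating `(ω ρ)' = ω' ρ + ω (-μ ρ + h γ)`
over `[z_min, z_max]` shows that every solution satisfies it.
-/

open MeasureTheory Real Set

noncomputable def stationaryProfile (γ M : ℝ → ℝ) (a z : ℝ) : ℝ :=
  ∫ y in a..z, γ y * exp (-(M z - M y))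

theorem hasDerivWithinAt_integral_Icc {E : Type*} [NormedAddCommGroup E] [NormedSpace ℝ E]
    [CompleteSpace E] {f : ℝ → E} {a b z : ℝ} (hf : ContinuousOn f (Icc a b))
    (hz : z ∈ Icc a b) : HasDerivWithinAt (fun u => ∫ x in a..u, f x) (f z) (Icc a b) z := by
  have : Fact (z ∈ Icc a b) := ⟨hz⟩
  exact intervalIntegral.integral_hasDerivWithinAt_right
    ((hf.mono (Icc_subset_Icc le_rfl hz.2)).intervalIntegrable_of_Icc hz.1)
    (hf.stronglyMeasurableAtFilter_nhdsWithin measurableSet_Icc z) (hf z hz)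

theorem stationaryProfile_self (γ M : ℝ → ℝ) (a : ℝ) : stationaryProfile γ M a a = 0 := by
  simp [stationaryProfile]

theorem stationaryProfile_eq_exp_mul (γ M : ℝ → ℝ) (a z : ℝ) :
    stationaryProfile γ M a z = exp (-M z) * ∫ y in a..z, γ y * exp (M y) := by
  rw [stationaryProfile, ← intervalIntegral.integral_const_mul]
  congr 1 with y
  rw [neg_sub, sub_eq_add_neg, exp_add]
  ring

theorem stationaryProfile_nonneg {γ M : ℝ → ℝ} {a b z : ℝ} (hγ : ∀ y ∈ Icc a b, 0 ≤ γ y)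
    (hz : z ∈ Icc a b) : 0 ≤ stationaryProfile γ M a z :=
  intervalIntegral.integral_nonneg hz.1 fun y hy =>
    mul_nonneg (hγ y ⟨hy.1, hy.2.trans hz.2⟩) (exp_pos _).le

theorem hasDerivWithinAt_stationaryProfile {μ γ M : ℝ → ℝ} {a b z : ℝ}
    (hM : ∀ z, HasDerivAt M (μ z) z) (hγ : ContinuousOn γ (Icc a b)) (hz : z ∈ Icc a b) :
    HasDerivWithinAt (stationaryProfile γ M a) (-μ z * stationaryProfile γ M a z + γ z)
      (Icc a b) z := by
  have hMc : Continuous M := continuous_iff_continuousAt.2 fun z => (hM z).continuousAt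
  have hI := hasDerivWithinAt_integral_Icc (f := fun y => γ y * exp (M y))
    (hγ.mul hMc.rexp.continuousOn) hz
  have hexp : exp (-M z) * exp (M z) = 1 := by rw [← exp_add, neg_add_cancel, exp_zero]
  rw [funext (stationaryProfile_eq_exp_mul γ M a)]
  refine ((hM z).neg.exp.hasDerivWithinAt.mul hI).congr_deriv ?_
  simp only [Pi.neg_apply]
  linear_combination (γ z) * hexp

theorem eqOn_zero_of_hasDerivWithinAt_neg_mul {μ M D : ℝ → ℝ} {a b : ℝ}
    (hM : ∀ z, HasDerivAt M (μ z) z)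
    (hD : ∀ z ∈ Icc a b, HasDerivWithinAt D (-μ z * D z) (Icc a b) z) (ha : D a = 0) :
    EqOn D 0 (Icc a b) := by
  intro z hz
  have hconst : ∀ x ∈ Icc a b,
      HasDerivWithinAt (fun x => exp (M x) * D x) 0 (Icc a b) x := fun x hx =>
    ((hM x).exp.hasDerivWithinAt.mul (hD x hx)).congr_deriv (by ring)
  have hle := (convex_Icc a b).norm_image_sub_le_of_norm_hasDerivWithin_le
    (f' := fun _ => 0) (C := 0) hconst (fun _ _ => by simp) (left_mem_Icc.2 (hz.1.trans hz.2)) hz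
  have hDz : exp (M z) * |D z| ≤ 0 := by simpa [ha] using hle
  exact abs_nonpos_iff.1 (nonpos_of_mul_nonpos_right hDz (exp_pos _))

theorem eqOn_mul_stationaryProfile {μ γ M ρ : ℝ → ℝ} {a b h : ℝ}
    (hM : ∀ z, HasDerivAt M (μ z) z) (hγ : ContinuousOn γ (Icc a b))
    (hρ : ∀ z ∈ Icc a b, HasDerivWithinAt ρ (-μ z * ρ z + h * γ z) (Icc a b) z)
    (ha : ρ a = 0) : EqOn ρ (fun z => h * stationaryProfile γ M a z) (Icc a b) := by
  intro z hz
  refine sub_eq_zero.1 (eqOn_zero_of_hasDerivWithinAt_neg_mul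
    (D := fun x => ρ x - h * stationaryProfile γ M a x) hM (fun x hx => ?_) ?_ hz)
  · exact ((hρ x hx).sub ((hasDerivWithinAt_stationaryProfile hM hγ hx).const_mul h)).congr_deriv
      (by ring)
  · simp [ha, stationaryProfile_self]

theorem budget_identity_of_hasDerivWithinAt {μ γ ρ ω ω' : ℝ → ℝ} {a b h : ℝ} (hab : a ≤ b)
    (hμ : ContinuousOn μ (Icc a b)) (hγ : ContinuousOn γ (Icc a b))
    (hω : ∀ z ∈ Icc a b, HasDerivWithinAt ω (ω' z) (Icc a b) z) (hω' : ContinuousOn ω' (Icc a b))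
    (hρ : ∀ z ∈ Icc a b, HasDerivWithinAt ρ (-μ z * ρ z + h * γ z) (Icc a b) z) :
    h * ∫ z in a..b, ω z * γ z = (∫ z in a..b, ω z * μ z * ρ z) + ω b * ρ b - ω a * ρ a
      - ∫ z in a..b, ρ z * ω' z := by
  have hωc : ContinuousOn ω (Icc a b) := fun z hz => (hω z hz).continuousWithinAt
  have hρc : ContinuousOn ρ (Icc a b) := fun z hz => (hρ z hz).continuousWithinAt
  have hωμρ : IntervalIntegrable (fun z => ω z * μ z * ρ z) volume a b :=
    ((hωc.mul hμ).mul hρc).intervalIntegrable_of_Icc hab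
  have hωγ : IntervalIntegrable (fun z => h * (ω z * γ z)) volume a b :=
    (continuousOn_const.mul (hωc.mul hγ)).intervalIntegrable_of_Icc hab
  have hparts := intervalIntegral.integral_mul_deriv_eq_deriv_mul_of_hasDerivWithinAt
    (u := ω) (v := ρ) (u' := ω') (v' := fun z => -μ z * ρ z + h * γ z)
    (by rwa [uIcc_of_le hab]) (by rwa [uIcc_of_le hab])
    (hω'.intervalIntegrable_of_Icc hab)
    (((hμ.neg.mul hρc).add (continuousOn_const.mul hγ)).intervalIntegrable_of_Icc hab)
  have hsplit : (∫ z in a..b, ω z * (-μ z * ρ z + h * γ z))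
      = h * (∫ z in a..b, ω z * γ z) - ∫ z in a..b, ω z * μ z * ρ z := by
    rw [← intervalIntegral.integral_const_mul, ← intervalIntegral.integral_sub hωγ hωμρ]
    congr 1 with z
    ring
  simp only [hsplit, mul_comm (ω' _)] at hparts
  linarith

theorem stmt8_general (zmin zmax : ℝ) (hz : zmin < zmax)
    (μ γ M ω ω' : ℝ → ℝ)
    (hμc : ContinuousOn μ (Icc zmin zmax)) (hγc : ContinuousOn γ (Icc zmin zmax))
    (hγ0 : ∀ z ∈ Icc zmin zmax, 0 ≤ γ z)
    (hM : ∀ z, HasDerivAt M (μ z) z)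
    (hω : ∀ z, HasDerivAt ω (ω' z) z) (hω'c : Continuous ω')
    (hωγ : 0 < ∫ z in zmin..zmax, ω z * γ z) :
    {ρ : ℝ → ℝ |
        (∀ z ∈ Icc zmin zmax, 0 ≤ ρ z) ∧ ρ zmin = 0 ∧
        ∃ hstar : ℝ, 0 ≤ hstar ∧
          hstar = ((∫ z in zmin..zmax, ω z * μ z * ρ z) + ω zmax * ρ zmax
              - ∫ z in zmin..zmax, ρ z * ω' z) / ∫ z in zmin..zmax, ω z * γ z ∧
          ∀ z ∈ Icc zmin zmax,
            HasDerivWithinAt ρ (-μ z * ρ z + hstar * γ z) (Icc zmin zmax) z}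
    = {ρ : ℝ → ℝ | ∃ C : ℝ, 0 ≤ C ∧
        Set.EqOn ρ (fun z => C * ∫ y in zmin..z, γ y * Real.exp (-(M z - M y)))
          (Icc zmin zmax)} := by
  ext ρ
  constructor
  · rintro ⟨-, hρmin, h, hh, -, hρ⟩
    exact ⟨h, hh, eqOn_mul_stationaryProfile hM hγc hρ hρmin⟩
  · rintro ⟨C, hC, hρ⟩
    replace hρ : EqOn ρ (fun z => C * stationaryProfile γ M zmin z) (Icc zmin zmax) := hρ
    have hρmin : ρ zmin = 0 := by
      rw [hρ (left_mem_Icc.2 hz.le)]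
      exact mul_eq_zero_of_right C (stationaryProfile_self γ M zmin)
    have hode : ∀ z ∈ Icc zmin zmax,
        HasDerivWithinAt ρ (-μ z * ρ z + C * γ z) (Icc zmin zmax) z := fun z hz' =>
      (((hasDerivWithinAt_stationaryProfile hM hγc hz').const_mul C).congr hρ (hρ hz')).congr_deriv
        (by rw [hρ hz']; ring)
    refine ⟨fun z hz' => ?_, hρmin, C, hC, ?_, hode⟩
    · rw [hρ hz']
      exact mul_nonneg hC (stationaryProfile_nonneg hγ0 hz')
    · rw [eq_div_iff hωγ.ne', budget_identity_of_hasDerivWithinAt hz.le hμc hγc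
        (fun z _ => (hω z).hasDerivWithinAt) hω'c.continuousOn hode, hρmin]
      ring

theorem stmt8 (zmin zmax : ℝ) (hz : zmin < zmax)
    (μ γ M ω ω' : ℝ → ℝ)
    (hμc : ContinuousOn μ (Icc zmin zmax)) (hγc : ContinuousOn γ (Icc zmin zmax))
    (hμ0 : ∀ z ∈ Icc zmin zmax, 0 ≤ μ z) (hγ0 : ∀ z ∈ Icc zmin zmax, 0 ≤ γ z)
    (hM : ∀ z, HasDerivAt M (μ z) z)
    (hω : ∀ z, HasDerivAt ω (ω' z) z) (hω'c : Continuous ω')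
    (hω0 : ∀ z ∈ Icc zmin zmax, 0 < ω z)
    (hωγ : 0 < ∫ z in zmin..zmax, ω z * γ z) :
    {ρ : ℝ → ℝ |
        (∀ z ∈ Icc zmin zmax, 0 ≤ ρ z) ∧ ρ zmin = 0 ∧
        ∃ hstar : ℝ, 0 ≤ hstar ∧
          hstar = ((∫ z in zmin..zmax, ω z * μ z * ρ z) + ω zmax * ρ zmax
              - ∫ z in zmin..zmax, ρ z * ω' z) / ∫ z in zmin..zmax, ω z * γ z ∧
          ∀ z ∈ Icc zmin zmax,
            HasDerivWithinAt ρ (-μ z * ρ z + hstar * γ z) (Icc zmin zmax) z}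
    = {ρ : ℝ → ℝ | ∃ C : ℝ, 0 ≤ C ∧
        Set.EqOn ρ (fun z => C * ∫ y in zmin..z, γ y * Real.exp (-(M z - M y)))
          (Icc zmin zmax)} :=
  stmt8_general zmin zmax hz μ γ M ω ω' hμc hγc hγ0 hM hω hω'c hωγ
end
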